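/- arXiv:2307.09610 — 3 statements merged into one kernel-verified Lean document; each statement's English description precedes it below -/
import Mathlib

section
/- For the BN parameterization with t(u)=6u^2+1, the group order polynomial r(u)=36u^4+36u^3+18u^2+6u+1 divides the evaluation Φ_12(t(u)-1) of the 12th cyclotomic polynomial, as polynomials in ℤ[u]. -/
/-!
Since `t(u) - 1 = 6u²` and `Φ₁₂(x) = x⁴ - x² + 1`, the polynomial `Φ₁₂(t(u) - 1) = 1296u⁸ - 36u⁴ + 1`
is the difference of squares `(36u⁴ + 18u² + 1)² - (36u³ + 6u)²`, i.e. it factors as `r(u) r(-u)`.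
-/

open Polynomial

theorem Polynomial.cyclotomic_twelve (R : Type*) [CommRing R] :
    cyclotomic 12 R = X ^ 4 - X ^ 2 + 1 := by
  rw [show 12 = 6 * 2 by rfl, ← cyclotomic_expand_eq_cyclotomic Nat.prime_two (by norm_num),
    cyclotomic_six]
  simp only [map_add, map_sub, map_pow, expand_X, map_one]
  ring

theorem Polynomial.cyclotomic_twelve_comp_six_mul_X_sq (R : Type*) [CommRing R] :
    (cyclotomic 12 R).comp (6 * X ^ 2) =
      (36 * X ^ 4 + 36 * X ^ 3 + 18 * X ^ 2 + 6 * X + 1) *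
        (36 * X ^ 4 - 36 * X ^ 3 + 18 * X ^ 2 - 6 * X + 1) := by
  rw [cyclotomic_twelve]
  simp only [add_comp, sub_comp, pow_comp, X_comp, one_comp]
  ring

/-- The BN group-order polynomial r(u) divides Φ₁₂(t(u) - 1) in ℤ[u],
    where t(u) = 6u² + 1. -/
theorem bn_order_divides_cyclotomic :
    (36 * X ^ 4 + 36 * X ^ 3 + 18 * X ^ 2 + 6 * X + 1 : Polynomial ℤ) ∣
      (cyclotomic 12 ℤ).comp ((6 * X ^ 2 + 1) - 1) := by
  rw [add_sub_cancel_right, cyclotomic_twelve_comp_six_mul_X_sq]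
  exact dvd_mul_right _ _
end

section
/- For Freeman's k=10 family, r(u)=25u^4+25u^3+15u^2+5u+1 divides Φ_10(p(u)) in ℤ[u], where Φ_10(x)=x^4-x^3+x^2-x+1 is the 10th cyclotomic polynomial and p(u)=25u^4+25u^3+25u^2+10u+3. -/
/-!
With trace `t(u) = 10u² + 5u + 3`, the family satisfies `r = p - (t - 1)`, so `p ≡ t - 1 (mod r)`
and hence `Φ₁₀(p) ≡ Φ₁₀(t - 1) (mod r)`. The latter is divisible by `r` on the nose:
`Φ₁₀(t - 1) = r · (400u⁴ + 400u³ + 240u² + 60u + 11)`.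
-/

open Polynomial

lemma cyclotomic_five (R : Type*) [Ring R] :
    cyclotomic 5 R = X ^ 4 + X ^ 3 + X ^ 2 + X + 1 := by
  have : Fact (Nat.Prime 5) := ⟨by norm_num⟩
  simp only [cyclotomic_prime, Finset.sum_range_succ, Finset.sum_range_zero, zero_add, pow_zero,
    pow_one]
  abel

lemma cyclotomic_ten (R : Type*) [Ring R] :
    cyclotomic 10 R = X ^ 4 - X ^ 3 + X ^ 2 - X + 1 := by
  suffices cyclotomic 10 ℤ = X ^ 4 - X ^ 3 + X ^ 2 - X + 1 by
    rw [← map_cyclotomic_int, this]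
    simp
  -- `Φ₅(X²) = Φ₁₀ · Φ₅`
  apply mul_right_cancel₀ (cyclotomic_ne_zero 5 ℤ)
  rw [show 10 = 5 * 2 by rfl, ← cyclotomic_expand_eq_cyclotomic_mul Nat.prime_two (by norm_num1),
    cyclotomic_five]
  simp only [map_add, map_pow, expand_X, map_one]
  ring

lemma sub_dvd_comp_sub {R : Type*} [CommRing R] (f a b : R[X]) :
    a - b ∣ f.comp a - f.comp b := by
  simpa only [comp, eval_map] using sub_dvd_eval_sub a b (f.map C)

lemma freeman10_cyclotomic_comp_trace_sub_one (R : Type*) [CommRing R] :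
    (cyclotomic 10 R).comp (10 * X ^ 2 + 5 * X + 2) =
      (25 * X ^ 4 + 25 * X ^ 3 + 15 * X ^ 2 + 5 * X + 1) *
        (400 * X ^ 4 + 400 * X ^ 3 + 240 * X ^ 2 + 60 * X + 11) := by
  simp only [cyclotomic_ten, sub_comp, add_comp, pow_comp, X_comp, one_comp]
  ring

/-- For Freeman's k = 10 family, r(u) divides Φ₁₀(p(u)) in ℤ[u],
    where Φ₁₀(x) = x⁴ - x³ + x² - x + 1. -/
theorem freeman10_cyclotomic_condition :
    cyclotomic 10 ℤ = X ^ 4 - X ^ 3 + X ^ 2 - X + 1 ∧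
    (25 * X ^ 4 + 25 * X ^ 3 + 15 * X ^ 2 + 5 * X + 1 : Polynomial ℤ) ∣
      (cyclotomic 10 ℤ).comp
        (25 * X ^ 4 + 25 * X ^ 3 + 25 * X ^ 2 + 10 * X + 3) := by
  refine ⟨cyclotomic_ten ℤ, ?_⟩
  set p : ℤ[X] := 25 * X ^ 4 + 25 * X ^ 3 + 25 * X ^ 2 + 10 * X + 3
  set s : ℤ[X] := 10 * X ^ 2 + 5 * X + 2
  have hr : (25 * X ^ 4 + 25 * X ^ 3 + 15 * X ^ 2 + 5 * X + 1 : ℤ[X]) = p - s := by ring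
  have hs : p - s ∣ (cyclotomic 10 ℤ).comp s := by
    rw [← hr, freeman10_cyclotomic_comp_trace_sub_one]
    exact dvd_mul_right _ _
  rw [hr, ← sub_add_cancel ((cyclotomic 10 ℤ).comp p) ((cyclotomic 10 ℤ).comp s)]
  exact dvd_add (sub_dvd_comp_sub _ p s) hs
end

section
/- Three-party one-round key agreement consistency: let e be a bilinear pairing, with private keys S_A=r_A s Q_A, S_B=r_B s Q_B, S_C=r_C s Q_C, public values R_X=r_X P and T_X = x_X R_X for X ∈ {A,B,C} and secrets a=x_A, b=x_B, c=x_C. Then K_A = e(Q_B T_B, Q_C T_C)^{a S_A}, K_B = e(Q_A T_A, Q_C T_C)^{b S_B}, K_C = e(Q_A T_A, Q_B T_B)^{c S_C} all equal e(P,P)^{s·abc·Q_A r_A Q_B r_B Q_C r_C}, hence K_A = K_B = K_C. -/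
/-- OR-3PID-KAP consistency: with long-term private keys S_X = r_X·s·Q_X,
    public values R_X = r_X·P, T_X = x_X·R_X, the three computed keys
    K_A = e(Q_B·T_B, Q_C·T_C)^(x_A·S_A), etc., all equal
    e(P,P)^(s·x_A x_B x_C·Q_A r_A Q_B r_B Q_C r_C), hence K_A = K_B = K_C. -/
theorem or3pid_kap_consistency {q : ℕ} [Fact (Nat.Prime q)]
    {G₁ G₂ : Type*} [AddCommGroup G₁] [Module (ZMod q) G₁] [CommGroup G₂]
    (e : G₁ → G₁ → G₂)
    (hladd : ∀ P₁ P₂ Q : G₁, e (P₁ + P₂) Q = e P₁ Q * e P₂ Q)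
    (hradd : ∀ P Q₁ Q₂ : G₁, e P (Q₁ + Q₂) = e P Q₁ * e P Q₂)
    (hlsmul : ∀ (m : ZMod q) (P Q : G₁), e (m • P) Q = e P Q ^ m.val)
    (hrsmul : ∀ (m : ZMod q) (P Q : G₁), e P (m • Q) = e P Q ^ m.val)
    (P : G₁) (s QA QB QC rA rB rC xA xB xC : ZMod q)
    (SA SB SC : ZMod q)
    (hSA : SA = rA * s * QA) (hSB : SB = rB * s * QB) (hSC : SC = rC * s * QC)
    (RA RB RC TA TB TC : G₁)
    (hRA : RA = rA • P) (hRB : RB = rB • P) (hRC : RC = rC • P)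
    (hTA : TA = xA • RA) (hTB : TB = xB • RB) (hTC : TC = xC • RC)
    (KA KB KC : G₂)
    (hKA : KA = e (QB • TB) (QC • TC) ^ (xA * SA).val)
    (hKB : KB = e (QA • TA) (QC • TC) ^ (xB * SB).val)
    (hKC : KC = e (QA • TA) (QB • TB) ^ (xC * SC).val) :
    (KA = e P P ^ (s * (xA * xB * xC) * (QA * rA * QB * rB * QC * rC)).val ∧
     KB = e P P ^ (s * (xA * xB * xC) * (QA * rA * QB * rB * QC * rC)).val ∧
     KC = e P P ^ (s * (xA * xB * xC) * (QA * rA * QB * rB * QC * rC)).val) ∧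
    KA = KB ∧ KB = KC := by
  -- key: exponent multiplicativity mod q
  have key : ∀ (m n : ZMod q) (X Y : G₁),
      e X Y ^ (m * n).val = (e X Y ^ n.val) ^ m.val := by
    intro m n X Y
    rw [← hlsmul, ← hlsmul, ← hlsmul, mul_smul]
  have L : ∀ (u v w : ZMod q),
      e (u • P) (v • P) ^ w.val = e P P ^ (w * (u * v)).val := by
    intro u v w
    rw [hlsmul, hrsmul, key w (u * v), key u v]
  have hQT : ∀ (Q x r : ZMod q) (T R : G₁), T = x • R → R = r • P →
      Q • T = (Q * x * r) • P := by
    intro Q x r T R hT hR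
    rw [hT, hR, smul_smul, smul_smul, mul_assoc]
  rw [hQT QA xA rA TA RA hTA hRA] at hKB hKC
  rw [hQT QB xB rB TB RB hTB hRB] at hKA hKC
  rw [hQT QC xC rC TC RC hTC hRC] at hKA hKB
  rw [L] at hKA hKB hKC
  have eA : xA * SA * (QB * xB * rB * (QC * xC * rC)) =
      s * (xA * xB * xC) * (QA * rA * QB * rB * QC * rC) := by rw [hSA]; ring
  have eB : xB * SB * (QA * xA * rA * (QC * xC * rC)) =
      s * (xA * xB * xC) * (QA * rA * QB * rB * QC * rC) := by rw [hSB]; ring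
  have eC : xC * SC * (QA * xA * rA * (QB * xB * rB)) =
      s * (xA * xB * xC) * (QA * rA * QB * rB * QC * rC) := by rw [hSC]; ring
  rw [eA] at hKA; rw [eB] at hKB; rw [eC] at hKC
  exact ⟨⟨hKA, hKB, hKC⟩, hKA.trans hKB.symm, hKB.trans hKC.symm⟩
end
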